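/- Fix an integer k ≥ 2 and define ψ(t) = Σ_{j=1}^{k−1} (2 − t)^{−j} for t ∈ [0,1]. Then ψ is increasing on [0,1]. Moreover, there exists an integer k_0 such that for all k ≥ k_0 and every t with 0 ≤ t ≤ 1/(2k): 1 − 2^{−(k−1)} + t − (k+1)·t/2^k + t²/2 ≤ ψ(t) ≤ 1 − 2^{−(k−1)} + t − (k+1)·t/2^k + 2t². -/

import Mathlib

lemma nat_pow_ineq : ∀ m : ℕ, 9 ≤ m → m^2 + m + 2 ≤ 2^m := by
  intro m hm
  induction m, hm using Nat.le_induction with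
  | base => norm_num
  | succ n hn ih =>
    have h2 : 2^(n+1) = 2 * 2^n := by ring
    nlinarith [ih, hn]

lemma pow_ineq (m : ℕ) (hm : 9 ≤ m) : (m:ℝ)^2 + m + 2 ≤ 2^m := by
  exact_mod_cast nat_pow_ineq m hm

lemma bern_upper (m : ℕ) : ∀ x : ℝ, 0 ≤ x → (m:ℝ)*x ≤ 1/4 →
    1 ≤ (1 + m*x + 2*m^2*x^2) * (1-x)^m := by
  induction m with
  | zero => intro x _ _; norm_num
  | succ n ih =>
    intro x hx hmx
    push_cast at hmx ⊢
    have hx4 : x ≤ 1/4 := by nlinarith [mul_nonneg (Nat.cast_nonneg (α := ℝ) n) hx]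
    have hnx : (n:ℝ)*x ≤ 1/4 := by nlinarith
    have h1 := ih x hx hnx
    have hpow : (0:ℝ) ≤ (1-x)^n := pow_nonneg (by linarith) n
    have key : (1 + (n:ℝ)*x + 2*(n:ℝ)^2*x^2) ≤ (1 + ((n:ℝ)+1)*x + 2*((n:ℝ)+1)^2*x^2)*(1-x) := by
      nlinarith [mul_le_mul_of_nonneg_left hmx (by positivity : (0:ℝ) ≤ 2*((n:ℝ)+1)*x^2),
        sq_nonneg x, mul_nonneg hx hx]
    calc (1:ℝ) ≤ (1+(n:ℝ)*x+2*(n:ℝ)^2*x^2)*(1-x)^n := h1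
      _ ≤ ((1+((n:ℝ)+1)*x+2*((n:ℝ)+1)^2*x^2)*(1-x))*(1-x)^n :=
          mul_le_mul_of_nonneg_right key hpow
      _ = (1+((n:ℝ)+1)*x+2*((n:ℝ)+1)^2*x^2)*(1-x)^(n+1) := by ring

lemma bern_lower (m : ℕ) (x : ℝ) (hx0 : 0 ≤ x) (hx1 : x ≤ 1) :
    (1 + (m:ℝ)*x) * (1-x)^m ≤ 1 := by
  have h1 : 1 + (m:ℝ)*x ≤ (1+x)^m := by
    have := one_add_mul_le_pow (a := x) (by linarith) m
    linarith
  have h2 : (0:ℝ) ≤ (1-x)^m := pow_nonneg (by linarith) m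
  calc (1+(m:ℝ)*x)*(1-x)^m ≤ (1+x)^m*(1-x)^m := mul_le_mul_of_nonneg_right h1 h2
    _ = (1-x^2)^m := by rw [← mul_pow]; ring_nf
    _ ≤ 1 := pow_le_one₀ (by nlinarith) (by nlinarith)

lemma geom_closed (t : ℝ) (ht : 2 - t ≠ 0) (m : ℕ) :
    (1-t) * ∑ j ∈ Finset.Icc 1 m, ((2-t)^j)⁻¹ = 1 - ((2-t)^m)⁻¹ := by
  rw [Finset.mul_sum]
  have h : ∀ j : ℕ, (1-t) * ((2-t)^(1+j))⁻¹ = ((2-t)^j)⁻¹ - ((2-t)^(j+1))⁻¹ := by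
    intro j
    have h1 : (2-t)^j ≠ 0 := pow_ne_zero _ ht
    have h2 : (2-t)^(j+1) ≠ 0 := pow_ne_zero _ ht
    rw [show 1+j = j+1 from by ring]
    field_simp
    ring
  rw [← Finset.Ico_add_one_right_eq_Icc, Finset.sum_Ico_eq_sum_range]
  simp only [Nat.succ_sub_one, h]
  rw [Finset.sum_range_sub' (f := fun i => ((2-t)^i)⁻¹)]
  simp

theorem psi_monotone_and_estimates :
    (∀ k : ℕ, 2 ≤ k →
      MonotoneOn (fun t : ℝ => ∑ j ∈ Finset.Icc 1 (k-1), ((2-t)^j)⁻¹)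
        (Set.Icc (0:ℝ) 1)) ∧
    ∃ k0 : ℕ, ∀ k : ℕ, k0 ≤ k → ∀ t : ℝ, 0 ≤ t → t ≤ 1/(2*k) →
      1 - ((2:ℝ)^(k-1))⁻¹ + t - (k+1)*t/(2:ℝ)^k + t^2/2 ≤
          ∑ j ∈ Finset.Icc 1 (k-1), ((2-t)^j)⁻¹ ∧
      ∑ j ∈ Finset.Icc 1 (k-1), ((2-t)^j)⁻¹ ≤
          1 - ((2:ℝ)^(k-1))⁻¹ + t - (k+1)*t/(2:ℝ)^k + 2*t^2 := by
  constructor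
  · intro k _ s hs t ht hst
    apply Finset.sum_le_sum
    intro j _
    have h2t : (0:ℝ) < 2 - t := by have := ht.2; simp only [Set.mem_Icc] at ht; linarith [ht.2]
    have h1 : (2-t)^j ≤ (2-s)^j := by
      apply pow_le_pow_left₀ (le_of_lt h2t)
      linarith
    exact inv_anti₀ (pow_pos h2t j) h1
  · refine ⟨10, ?_⟩
    intro k hk t ht0 ht1
    obtain ⟨m, hm9, rfl⟩ : ∃ m, 9 ≤ m ∧ k = m + 1 := ⟨k-1, by omega, by omega⟩
    simp only [Nat.add_sub_cancel] at *
    push_cast at ht1 ⊢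
    have hmR : (9:ℝ) ≤ m := by exact_mod_cast hm9
    have hkpos : (0:ℝ) < 2*((m:ℝ)+1) := by linarith
    have hkt : t * (2*((m:ℝ)+1)) ≤ 1 := (le_div_iff₀ hkpos).mp ht1
    have ht20 : t ≤ 1/20 := by nlinarith
    have h2t : (2:ℝ) - t ≠ 0 := by norm_num; linarith
    have h1t : (0:ℝ) < 1 - t := by linarith
    have hS := geom_closed t h2t m
    -- bounds on ((2-t)^m)⁻¹
    have hx0 : (0:ℝ) ≤ t/2 := by linarith
    have hmx : (m:ℝ)*(t/2) ≤ 1/4 := by nlinarith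
    have h1x : (0:ℝ) < 1 - t/2 := by linarith
    have hP : (0:ℝ) < (1 - t/2)^m := pow_pos h1x m
    have heq : (2-t)^m = 2^m * (1-t/2)^m := by
      rw [← mul_pow]; ring_nf
    have hQ : (0:ℝ) < (2:ℝ)^m := by positivity
    have hq0 : (0:ℝ) < ((2:ℝ)^m)⁻¹ := by positivity
    -- upper bound on inverse
    have hUpp : ((2-t)^m)⁻¹ ≤ ((2:ℝ)^m)⁻¹ * (1 + m*(t/2) + 2*(m:ℝ)^2*(t/2)^2) := by
      have hb := bern_upper m (t/2) hx0 hmx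
      have h2 : ((1-t/2)^m)⁻¹ ≤ 1 + m*(t/2) + 2*(m:ℝ)^2*(t/2)^2 := by
        rw [← one_div]
        exact (div_le_iff₀ hP).mpr (by linarith)
      rw [heq, mul_inv]
      exact mul_le_mul_of_nonneg_left h2 (le_of_lt hq0)
    -- lower bound on inverse
    have hLow : ((2:ℝ)^m)⁻¹ * (1 + m*(t/2)) ≤ ((2-t)^m)⁻¹ := by
      have hb := bern_lower m (t/2) hx0 (by linarith)
      have h2 : 1 + (m:ℝ)*(t/2) ≤ ((1-t/2)^m)⁻¹ := by
        rw [← one_div]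
        exact (le_div_iff₀ hP).mpr (by linarith)
      rw [heq, mul_inv]
      exact mul_le_mul_of_nonneg_left h2 (le_of_lt hq0)
    have hkey : ((2:ℝ)^m)⁻¹ * ((m:ℝ)^2 + m + 2) ≤ 1 := by
      have := pow_ineq m hm9
      calc ((2:ℝ)^m)⁻¹ * ((m:ℝ)^2 + m + 2) ≤ ((2:ℝ)^m)⁻¹ * 2^m :=
            mul_le_mul_of_nonneg_left this (le_of_lt hq0)
        _ = 1 := inv_mul_cancel₀ (ne_of_gt hQ)
    have hdiv : ((m:ℝ) + 1 + 1) * t / (2:ℝ)^(m+1) = ((m:ℝ)+2)*t/2 * ((2:ℝ)^m)⁻¹ := by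
      rw [pow_succ]
      field_simp
      ring
    constructor
    · rw [← mul_le_mul_iff_of_pos_right h1t, mul_comm (∑ j ∈ Finset.Icc 1 m, ((2-t)^j)⁻¹) (1-t), hS,
        hdiv]
      nlinarith [hUpp, hkey, mul_nonneg (mul_nonneg ht0 ht0) ht0, sq_nonneg t,
        mul_nonneg (sq_nonneg t) (by linarith : (0:ℝ) ≤ 1 - ((2:ℝ)^m)⁻¹ * ((m:ℝ)^2 + m + 2)),
        hq0.le]
    · rw [← mul_le_mul_iff_of_pos_right h1t, mul_comm (∑ j ∈ Finset.Icc 1 m, ((2-t)^j)⁻¹) (1-t), hS,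
        hdiv]
      nlinarith [hLow, mul_nonneg (sq_nonneg t) (by linarith : (0:ℝ) ≤ 1 - 2*t),
        mul_nonneg (mul_nonneg hq0.le (by linarith : (0:ℝ) ≤ (m:ℝ)+2)) (sq_nonneg t),
        hq0.le, sq_nonneg t]
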